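/- There exists a holomorphic function h on ℂ \ [-15, 1], given by h(x) = (x + 1 + (x+7)·√(1 - 64/(x+7)^2))/2 (with the principal square root branch), such that f(h(x)) = x for all x ∈ ℂ \ [-15,1], where f(x) = (x^2-x+4)/(x+3), and h(x) - x - 4 → 0 as |x| → ∞. -/

import Mathlib

noncomputable def fmap (x : ℂ) : ℂ := (x ^ 2 - x + 4) / (x + 3)

noncomputable def hinv (x : ℂ) : ℂ :=
  (x + 1 + (x + 7) * (1 - 64 / (x + 7) ^ 2) ^ (1 / 2 : ℂ)) / 2

open Complex Filter

lemma stmt12_sqsq (w : ℂ) : (w ^ (1/2 : ℂ)) ^ 2 = w := by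
  rw [one_div]
  exact_mod_cast Complex.cpow_nat_inv_pow w (by norm_num : (2:ℕ) ≠ 0)

lemma stmt12_avoid (x : ℂ) (hx : ∀ r : ℝ, r ∈ Set.Icc (-15 : ℝ) 1 → x ≠ (r : ℂ))
    (r : ℝ) (hr : r ≤ 0) : 1 - 64 / (x + 7) ^ 2 ≠ (r : ℂ) := by
  intro heq
  have hx7 : x + 7 ≠ 0 := by
    intro h
    refine hx (-7) (by norm_num) ?_
    have : x = -7 := by linear_combination h
    simpa using this
  set s : ℝ := Real.sqrt (1 - r) with hs
  have hsnn : 0 ≤ s := Real.sqrt_nonneg _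
  have hs2 : s ^ 2 = 1 - r := Real.sq_sqrt (by linarith)
  have hs1 : 1 ≤ s := by nlinarith
  have hs0 : 0 < s := by linarith
  have hssq : (s : ℂ) ^ 2 = 1 - (r : ℂ) := by
    have := congrArg (Complex.ofReal) hs2; push_cast at this; linear_combination this
  have hsq : (x + 7) ^ 2 * ((1:ℂ) - r) = 64 := by
    have h2 : (x + 7) ^ 2 ≠ 0 := pow_ne_zero _ hx7
    field_simp at heq
    linear_combination heq
  have hsC : (s : ℂ) ≠ 0 := by exact_mod_cast hs0.ne'
  have hfac : (x - ((-7 + 8/s : ℝ) : ℂ)) * (x - ((-7 - 8/s : ℝ) : ℂ)) * (s:ℂ)^2 = 0 := by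
    push_cast
    field_simp
    linear_combination (x+7)^2 * hssq + hsq
  have h8 : 8 / s ≤ 8 := by rw [div_le_iff₀ hs0]; nlinarith
  have h8' : 0 < 8 / s := by positivity
  rcases mul_eq_zero.mp hfac with h | h
  · rcases mul_eq_zero.mp h with h | h
    · exact hx (-7 + 8/s) (by constructor <;> linarith) (by push_cast at h ⊢; linear_combination h)
    · exact hx (-7 - 8/s) (by constructor <;> linarith) (by push_cast at h ⊢; linear_combination h)
  · exact absurd h (pow_ne_zero _ hsC)

lemma stmt12_slit (x : ℂ) (havoid : ∀ r : ℝ, r ≤ 0 → 1 - 64 / (x + 7) ^ 2 ≠ (r : ℂ)) :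
    (1 - 64 / (x + 7) ^ 2) ∈ Complex.slitPlane := by
  by_contra h
  rw [Complex.mem_slitPlane_iff] at h
  push_neg at h
  set w := 1 - 64 / (x + 7) ^ 2 with hw
  refine havoid w.re h.1 ?_
  rw [← Complex.re_add_im w, h.2]; simp

lemma stmt12_diffat (x : ℂ) (hx7 : x + 7 ≠ 0)
    (hslit : (1 - 64 / (x + 7) ^ 2) ∈ Complex.slitPlane) :
    DifferentiableAt ℂ hinv x := by
  have hbase : DifferentiableAt ℂ (fun x : ℂ => 1 - 64 / (x + 7) ^ 2) x := by
    apply DifferentiableAt.sub (differentiableAt_const _)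
    exact (differentiableAt_const _).div (by fun_prop) (pow_ne_zero _ hx7)
  have hpow : DifferentiableAt ℂ (fun x : ℂ => (1 - 64 / (x + 7) ^ 2) ^ (1/2 : ℂ)) x :=
    hbase.cpow (differentiableAt_const _) hslit
  unfold hinv
  fun_prop

lemma stmt12_quad (x : ℂ) (hx7 : x + 7 ≠ 0) :
    hinv x ^ 2 - (1 + x) * hinv x + (4 - 3 * x) = 0 := by
  have hu2 : ((x+7) * (1 - 64/(x+7)^2) ^ (1/2:ℂ))^2 = (x+7)^2 - 64 := by
    rw [mul_pow, stmt12_sqsq]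
    field_simp
  unfold hinv
  linear_combination (1/4 : ℂ) * hu2

lemma stmt12_fmap_hinv (x : ℂ) (hx7 : x + 7 ≠ 0) : fmap (hinv x) = x := by
  have hq := stmt12_quad x hx7
  have hy3 : hinv x + 3 ≠ 0 := by
    intro h
    have h16 : (16 : ℂ) = 0 := by linear_combination hq - (hinv x - (x + 4)) * h
    norm_num at h16
  unfold fmap
  rw [div_eq_iff hy3]
  linear_combination hq

noncomputable def stmt12_F (t : ℂ) : ℂ := -32 * t / ((1 - 64 * t ^ 2) ^ (1/2 : ℂ) + 1)

lemma stmt12_hF0 : stmt12_F 0 = 0 := by simp [stmt12_F]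

lemma stmt12_hFcont : ContinuousAt stmt12_F 0 := by
  have hb : ContinuousAt (fun t : ℂ => 1 - 64 * t ^ 2) 0 := by fun_prop
  have hp : ContinuousAt (fun t : ℂ => (1 - 64 * t ^ 2) ^ (1/2 : ℂ)) 0 := by
    apply hb.cpow continuousAt_const
    simp [Complex.mem_slitPlane_iff]
  apply ContinuousAt.div (by fun_prop) (hp.add continuousAt_const)
  simp [Complex.one_cpow]

lemma stmt12_tendsto_shift :
    Tendsto (fun x : ℂ => x + 7) (Bornology.cobounded ℂ) (Bornology.cobounded ℂ) := by
  nth_rewrite 2 [← comap_norm_atTop]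
  rw [tendsto_comap_iff]
  have h1 : Tendsto (fun x : ℂ => ‖x‖ - 7) (Bornology.cobounded ℂ) atTop :=
    tendsto_atTop_add_const_right _ (-7) tendsto_norm_cobounded_atTop
  apply tendsto_atTop_mono _ h1
  intro x
  have := norm_add_le (x + 7) (-7)
  simp only [Function.comp] at *
  simp at this ⊢
  linarith [this]

lemma stmt12_key_eq (x : ℂ) (hx : 100 ≤ ‖x‖) : hinv x - x - 4 = stmt12_F (1/(x+7)) := by
  have hx7 : x + 7 ≠ 0 := by
    intro h
    have : ‖x‖ = 7 := by rw [show x = -7 by linear_combination h]; simp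
    linarith
  set w : ℂ := 1 - 64 / (x + 7) ^ 2 with hw
  set q : ℂ := w ^ (1/2 : ℂ) with hq
  have hwq : q ^ 2 = w := stmt12_sqsq w
  have hw2 : w * (x+7)^2 = (x+7)^2 - 64 := by rw [hw]; field_simp
  have hq1 : q + 1 ≠ 0 := by
    intro h
    have hqe : q = -1 := by linear_combination h
    have hw1 : w = 1 := by rw [← hwq, hqe]; ring
    rw [hq, hw1, Complex.one_cpow] at hqe
    norm_num at hqe
  have harg : 1 - 64 * (1/(x+7)) ^ 2 = w := by
    rw [hw]; field_simp
  rw [stmt12_F, harg, ← hq]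
  rw [hinv, ← hq]
  clear_value q w
  clear hw hq harg
  field_simp
  ring_nf
  linear_combination ((x+7)^2) * hwq + hw2

theorem stmt12 :
    ∃ h : ℂ → ℂ, (∀ x, h x = hinv x) ∧
      (∀ x ∈ {x : ℂ | ∀ r : ℝ, r ∈ Set.Icc (-15 : ℝ) 1 → x ≠ (r : ℂ)},
        ∀ r : ℝ, r ≤ 0 → 1 - 64 / (x + 7) ^ 2 ≠ (r : ℂ)) ∧
      DifferentiableOn ℂ h
        {x : ℂ | ∀ r : ℝ, r ∈ Set.Icc (-15 : ℝ) 1 → x ≠ (r : ℂ)} ∧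
      (∀ x ∈ {x : ℂ | ∀ r : ℝ, r ∈ Set.Icc (-15 : ℝ) 1 → x ≠ (r : ℂ)},
        fmap (h x) = x) ∧
      Filter.Tendsto (fun x => h x - x - 4) (Bornology.cobounded ℂ) (nhds 0) := by
  refine ⟨hinv, fun _ => rfl, fun x hx => stmt12_avoid x hx, ?_, ?_, ?_⟩
  · intro x hx
    have hx7 : x + 7 ≠ 0 := by
      intro h
      refine hx (-7) (by norm_num) ?_
      have : x = -7 := by linear_combination h
      simpa using this
    exact (stmt12_diffat x hx7 (stmt12_slit x (stmt12_avoid x hx))).differentiableWithinAt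
  · intro x hx
    have hx7 : x + 7 ≠ 0 := by
      intro h
      refine hx (-7) (by norm_num) ?_
      have : x = -7 := by linear_combination h
      simpa using this
    exact stmt12_fmap_hinv x hx7
  · have h1 : Tendsto (fun x : ℂ => 1/(x+7)) (Bornology.cobounded ℂ) (nhds 0) := by
      simpa [one_div, Function.comp_def] using tendsto_inv₀_cobounded.comp stmt12_tendsto_shift
    have h2 : Tendsto (fun x : ℂ => stmt12_F (1/(x+7))) (Bornology.cobounded ℂ) (nhds 0) := by
      have := stmt12_hFcont.tendsto.comp h1
      rwa [stmt12_hF0] at this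
    refine h2.congr' ?_
    filter_upwards [eventually_cobounded_le_norm (100 : ℝ)] with x hx
    exact (stmt12_key_eq x hx).symm
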